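/- Let G be a linear disk graph on n vertices, with a disk representation (D_v)_{v ∈ V(G)} in which every disk intersects the x-axis (|y_v| ≤ r_v for all v). Then G contains a balanced separator S which can be partitioned into five sets V₁, V₂, V₃, V₄, V₅ such that for each i ∈ {1,2,3,4} the induced subgraph G[Vᵢ] admits a Δ-disk representation, and G[V₅] is a clique. -/

import Mathlib

open Finset


private lemma mydist2 (p q : EuclideanSpace ℝ (Fin 2)) :
    dist p q = Real.sqrt ((p 0 - q 0)^2 + (p 1 - q 1)^2) := by
  rw [EuclideanSpace.dist_eq, Fin.sum_univ_two]
  simp [Real.dist_eq, sq_abs]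

private lemma coord0_le (p q : EuclideanSpace ℝ (Fin 2)) : |p 0 - q 0| ≤ dist p q := by
  rw [mydist2, ← Real.sqrt_sq_eq_abs]
  apply Real.sqrt_le_sqrt; nlinarith [sq_nonneg (p 1 - q 1)]

private lemma coord1_le (p q : EuclideanSpace ℝ (Fin 2)) : |p 1 - q 1| ≤ dist p q := by
  rw [mydist2, ← Real.sqrt_sq_eq_abs]
  apply Real.sqrt_le_sqrt; nlinarith [sq_nonneg (p 0 - q 0)]

private lemma ball_inter_iff {E : Type*} [NormedAddCommGroup E] [NormedSpace ℝ E]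
    (x y : E) {r s : ℝ} (hr : 0 ≤ r) (hs : 0 ≤ s) :
    (Metric.closedBall x r ∩ Metric.closedBall y s).Nonempty ↔ dist x y ≤ r + s := by
  constructor
  · exact fun h => Metric.dist_le_add_of_nonempty_closedBall_inter_closedBall h
  · intro h
    by_cases hd : dist x y ≤ r
    · exact ⟨y, by simpa [Metric.mem_closedBall, dist_comm] using hd, by simp [hs]⟩
    · push_neg at hd
      have hdpos : 0 < dist x y := lt_of_le_of_lt hr hd
      refine ⟨x + (r / dist x y) • (y - x), ?_, ?_⟩
      · have he : x + (r / dist x y) • (y - x) - x = (r / dist x y) • (y - x) := by abel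
        rw [Metric.mem_closedBall, dist_eq_norm, he, norm_smul, Real.norm_eq_abs,
          abs_of_nonneg (div_nonneg hr hdpos.le), ← dist_eq_norm, dist_comm y x,
          div_mul_cancel₀ r hdpos.ne']
      · have he : x + (r / dist x y) • (y - x) - y = (r / dist x y - 1) • (y - x) := by
          rw [sub_smul, one_smul]; abel
        rw [Metric.mem_closedBall, dist_eq_norm, he, norm_smul, Real.norm_eq_abs,
          ← dist_eq_norm, dist_comm y x,
          abs_of_nonpos (by rw [sub_nonpos]; exact (div_le_one hdpos).2 hd.le)]
        have h2 : -(r / dist x y - 1) * dist x y = dist x y - r := by field_simp; ring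
        rw [h2]; linarith

private lemma median {V : Type*} [Fintype V] [DecidableEq V] (f : V → ℝ) :
    ∃ t : ℝ, (univ.filter fun v => f v < t).card ≤ (Fintype.card V + 1)/2 ∧
             (univ.filter fun v => t < f v).card ≤ (Fintype.card V + 1)/2 := by
  cases isEmpty_or_nonempty V with
  | inl h => exact ⟨0, by simp [Finset.univ_eq_empty]⟩
  | inr h =>
    set m := (Fintype.card V + 1)/2 with hm
    set T : Finset V := univ.filter (fun v => (univ.filter fun w => f v < f w).card ≤ m) with hT
    have hTne : T.Nonempty := by
      obtain ⟨v, -, hv⟩ := Finset.exists_max_image univ f univ_nonempty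
      refine ⟨v, mem_filter.2 ⟨mem_univ _, ?_⟩⟩
      have : (univ.filter fun w => f v < f w) = ∅ := by
        apply filter_eq_empty_iff.2
        exact fun w _ => not_lt.2 (hv w (mem_univ w))
      simp [this]
    obtain ⟨v₀, hv₀T, hmin⟩ := Finset.exists_min_image T f hTne
    refine ⟨f v₀, ?_, (mem_filter.1 hv₀T).2⟩
    by_contra hcon
    push_neg at hcon
    set L := univ.filter fun v => f v < f v₀ with hL
    have hLne : L.Nonempty := card_pos.1 (by omega)
    obtain ⟨u, huL, humax⟩ := Finset.exists_max_image L f hLne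
    have huf : f u < f v₀ := (mem_filter.1 huL).2
    have huT : u ∉ T := fun hmem => absurd (hmin u hmem) (not_le.2 huf)
    have hu2 : m + 1 ≤ (univ.filter fun w => f u < f w).card := by
      by_contra hc
      exact huT (mem_filter.2 ⟨mem_univ _, by omega⟩)
    have hsub : (univ.filter fun w => f u < f w) ⊆ univ \ L := by
      intro w hw
      rw [mem_sdiff]
      exact ⟨mem_univ _, fun hwL => absurd (humax w hwL) (not_le.2 (mem_filter.1 hw).2)⟩
    have hcard := card_le_card hsub
    rw [card_sdiff_of_subset (subset_univ L), card_univ] at hcard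
    have hLle := card_le_card (subset_univ L)
    rw [card_univ] at hLle
    omega


/-- A Δ-disk representation of a simple graph `G`: each vertex `v` gets a
closed disk with center `c v = (x_v, y_v)`, `x_v > 0`, `y_v > 0`, and radius
`r v` with `max x_v y_v ≤ r v < √(x_v² + y_v²)` (the disk meets both axes but
misses the origin); distinct vertices are adjacent iff their disks intersect. -/
def IsDeltaDiskRep {V : Type*} (G : SimpleGraph V)
    (c : V → EuclideanSpace ℝ (Fin 2)) (r : V → ℝ) : Prop :=
  (∀ v, 0 < c v 0) ∧ (∀ v, 0 < c v 1) ∧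
  (∀ v, max (c v 0) (c v 1) ≤ r v) ∧ (∀ v, r v < dist (c v) 0) ∧
  ∀ u v, u ≠ v → (G.Adj u v ↔
    (Metric.closedBall (c u) (r u) ∩ Metric.closedBall (c v) (r v)).Nonempty)

private lemma deltaRep_of {V : Type*} (G : SimpleGraph V)
    (c : V → EuclideanSpace ℝ (Fin 2)) (r : V → ℝ)
    (hG : ∀ u v : V, u ≠ v → (G.Adj u v ↔
      (Metric.closedBall (c u) (r u) ∩ Metric.closedBall (c v) (r v)).Nonempty))
    (W : Set V) (x y : V → ℝ)
    (hx : ∀ v ∈ W, 0 < x v) (hy : ∀ v ∈ W, 0 < y v)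
    (hxr : ∀ v ∈ W, x v ≤ r v) (hyr : ∀ v ∈ W, y v ≤ r v)
    (hlt : ∀ v ∈ W, r v < Real.sqrt (x v ^ 2 + y v ^ 2))
    (hdist : ∀ u ∈ W, ∀ v ∈ W,
      (x u - x v)^2 + (y u - y v)^2 = (c u 0 - c v 0)^2 + (c u 1 - c v 1)^2) :
    ∃ c' r', IsDeltaDiskRep (G.induce W) c' r' := by
  classical
  set c' : W → EuclideanSpace ℝ (Fin 2) :=
    fun v => (WithLp.equiv 2 (Fin 2 → ℝ)).symm ![x v.1, y v.1] with hc'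
  have h0 : ∀ v : W, c' v 0 = x v.1 := fun _ => rfl
  have h1 : ∀ v : W, c' v 1 = y v.1 := fun _ => rfl
  refine ⟨c', fun v => r v.1, fun v => by rw [h0]; exact hx v.1 v.2,
    fun v => by rw [h1]; exact hy v.1 v.2,
    fun v => by rw [h0, h1]; exact max_le (hxr v.1 v.2) (hyr v.1 v.2), ?_, ?_⟩
  · intro v
    have hz0 : (0 : EuclideanSpace ℝ (Fin 2)) 0 = 0 := rfl
    have hz1 : (0 : EuclideanSpace ℝ (Fin 2)) 1 = 0 := rfl
    rw [mydist2, h0, h1, hz0, hz1, sub_zero, sub_zero]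
    exact hlt v.1 v.2
  · intro u v huv
    have hne : (u : V) ≠ v := fun h => huv (Subtype.ext h)
    have hru : 0 ≤ r u.1 := le_trans (hx u.1 u.2).le (hxr u.1 u.2)
    have hrv : 0 ≤ r v.1 := le_trans (hx v.1 v.2).le (hxr v.1 v.2)
    have hdd : dist (c' u) (c' v) = dist (c u.1) (c v.1) := by
      rw [mydist2, mydist2, h0, h0, h1, h1, hdist u.1 u.2 v.1 v.2]
    have hadj : (G.induce W).Adj u v ↔ G.Adj u.1 v.1 := Iff.rfl
    rw [hadj, hG u.1 v.1 hne, ball_inter_iff _ _ hru hrv, ball_inter_iff _ _ hru hrv, hdd]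

/-- Any linear disk graph (here, with a representation in which every disk
meets the `x`-axis) contains a balanced separator `S` which can be partitioned
into five sets `V₁, …, V₅` such that `G[Vᵢ]` is a Δ-disk graph for
`1 ≤ i ≤ 4` and `G[V₅]` is a clique. -/
theorem linearDiskGraph_separator_into_delta_disks_and_clique
    {V : Type*} [Fintype V] [DecidableEq V] (G : SimpleGraph V)
    (c : V → EuclideanSpace ℝ (Fin 2)) (r : V → ℝ)
    (hr : ∀ v, 0 < r v)
    (hline : ∀ v, |c v 1| ≤ r v)
    (hG : ∀ u v : V, u ≠ v → (G.Adj u v ↔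
      (Metric.closedBall (c u) (r u) ∩ Metric.closedBall (c v) (r v)).Nonempty)) :
    ∃ S A B : Finset V,
      (∀ v : V, v ∈ S ∨ v ∈ A ∨ v ∈ B) ∧
      Disjoint S A ∧ Disjoint S B ∧ Disjoint A B ∧
      A.card ≤ (Fintype.card V + 1) / 2 ∧ B.card ≤ (Fintype.card V + 1) / 2 ∧
      (∀ a ∈ A, ∀ b ∈ B, ¬ G.Adj a b) ∧
      ∃ V1 V2 V3 V4 V5 : Finset V,
        V1 ∪ V2 ∪ V3 ∪ V4 ∪ V5 = S ∧
        List.Pairwise Disjoint [V1, V2, V3, V4, V5] ∧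
        (∃ c1 r1, IsDeltaDiskRep (G.induce (V1 : Set V)) c1 r1) ∧
        (∃ c2 r2, IsDeltaDiskRep (G.induce (V2 : Set V)) c2 r2) ∧
        (∃ c3 r3, IsDeltaDiskRep (G.induce (V3 : Set V)) c3 r3) ∧
        (∃ c4 r4, IsDeltaDiskRep (G.induce (V4 : Set V)) c4 r4) ∧
        G.IsClique (V5 : Set V) := by
  classical
  obtain ⟨t, htA, htB⟩ := median (fun v => c v 0)
  set pt : EuclideanSpace ℝ (Fin 2) := (WithLp.equiv 2 (Fin 2 → ℝ)).symm ![t, 0] with hptdef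
  have hdistpt : ∀ v, dist (c v) pt = Real.sqrt ((c v 0 - t)^2 + (c v 1)^2) := by
    intro v
    have h0 : pt 0 = t := rfl
    have h1 : pt 1 = 0 := rfl
    rw [mydist2, h0, h1, sub_zero]
  set S : Finset V := univ.filter (fun v => |c v 0 - t| ≤ r v) with hSdef
  set A : Finset V := univ.filter (fun v => c v 0 + r v < t) with hAdef
  set B : Finset V := univ.filter (fun v => t < c v 0 - r v) with hBdef
  have hmemS : ∀ v, v ∈ S ↔ |c v 0 - t| ≤ r v := fun v => by simp [hSdef]
  have hmemA : ∀ v, v ∈ A ↔ c v 0 + r v < t := fun v => by simp [hAdef]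
  have hmemB : ∀ v, v ∈ B ↔ t < c v 0 - r v := fun v => by simp [hBdef]
  refine ⟨S, A, B, ?_, ?_, ?_, ?_, ?_, ?_, ?_, ?_⟩
  · intro v
    rcases lt_or_ge (c v 0 + r v) t with h | h
    · exact Or.inr (Or.inl ((hmemA v).2 h))
    rcases lt_or_ge t (c v 0 - r v) with h' | h'
    · exact Or.inr (Or.inr ((hmemB v).2 h'))
    · exact Or.inl ((hmemS v).2 (abs_le.2 ⟨by linarith, by linarith⟩))
  · rw [Finset.disjoint_left]
    intro v hvS hvA
    have h1 := abs_le.1 ((hmemS v).1 hvS)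
    have h2 := (hmemA v).1 hvA
    linarith [h1.1]
  · rw [Finset.disjoint_left]
    intro v hvS hvB
    have h1 := abs_le.1 ((hmemS v).1 hvS)
    have h2 := (hmemB v).1 hvB
    linarith [h1.2]
  · rw [Finset.disjoint_left]
    intro v hvA hvB
    have h1 := (hmemA v).1 hvA
    have h2 := (hmemB v).1 hvB
    linarith [hr v]
  · refine le_trans (card_le_card ?_) htA
    intro v hv
    rw [mem_filter]
    exact ⟨mem_univ _, by have h := (hmemA v).1 hv; have := hr v; linarith⟩
  · refine le_trans (card_le_card ?_) htB
    intro v hv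
    rw [mem_filter]
    exact ⟨mem_univ _, by have h := (hmemB v).1 hv; have := hr v; linarith⟩
  · intro a ha b hb hadj
    have h1 := (hmemA a).1 ha
    have h2 := (hmemB b).1 hb
    have hne : a ≠ b := by rintro rfl; linarith [hr a]
    obtain ⟨p, hpa, hpb⟩ := (hG a b hne).1 hadj
    rw [Metric.mem_closedBall] at hpa hpb
    have h3 := abs_le.1 (le_trans (coord0_le p (c a)) hpa)
    have h4 := abs_le.1 (le_trans (coord0_le p (c b)) hpb)
    linarith [h3.2, h4.1]
  · set V5 : Finset V := S.filter (fun v => dist (c v) pt ≤ r v) with hV5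
    set V1 : Finset V := S.filter (fun v => ¬ dist (c v) pt ≤ r v ∧ t < c v 0 ∧ 0 < c v 1) with hV1
    set V2 : Finset V := S.filter (fun v => ¬ dist (c v) pt ≤ r v ∧ c v 0 < t ∧ 0 < c v 1) with hV2
    set V3 : Finset V := S.filter (fun v => ¬ dist (c v) pt ≤ r v ∧ c v 0 < t ∧ c v 1 < 0) with hV3
    set V4 : Finset V := S.filter (fun v => ¬ dist (c v) pt ≤ r v ∧ t < c v 0 ∧ c v 1 < 0) with hV4
    have hdisj : ∀ (p q : V → Prop) (_ : DecidablePred p) (_ : DecidablePred q),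
        (∀ v, p v → q v → False) → Disjoint (S.filter p) (S.filter q) := by
      intro p q _ _ h
      rw [Finset.disjoint_left]
      intro a ha hb
      exact h a (Finset.mem_filter.1 ha).2 (Finset.mem_filter.1 hb).2
    refine ⟨V1, V2, V3, V4, V5, ?_, ?_, ?_, ?_, ?_, ?_, ?_⟩
    · ext v
      simp only [hV1, hV2, hV3, hV4, hV5, Finset.mem_union, Finset.mem_filter]
      constructor
      · rintro ((((h | h) | h) | h) | h) <;> exact h.1
      · intro hvS
        by_cases h5 : dist (c v) pt ≤ r v
        · tauto
        have hx : c v 0 ≠ t := by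
          intro hxx
          apply h5
          rw [hdistpt v, hxx, sub_self]
          norm_num [Real.sqrt_sq_eq_abs]
          exact hline v
        have hy : c v 1 ≠ 0 := by
          intro hyy
          apply h5
          rw [hdistpt v, hyy]
          norm_num [Real.sqrt_sq_eq_abs]
          exact (hmemS v).1 hvS
        rcases hx.lt_or_gt with hx' | hx' <;> rcases hy.lt_or_gt with hy' | hy' <;> tauto
    · refine List.Pairwise.cons ?_ (List.Pairwise.cons ?_ (List.Pairwise.cons ?_
        (List.Pairwise.cons ?_ (List.pairwise_singleton _ _)))) <;>
        intro X hX <;>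
        simp only [List.mem_cons, List.mem_singleton, List.not_mem_nil, or_false] at hX
      · rcases hX with rfl | rfl | rfl | rfl
        · exact hdisj _ _ _ _ (fun v h1 h2 => by linarith [h1.2.1, h2.2.1])
        · exact hdisj _ _ _ _ (fun v h1 h2 => by linarith [h1.2.1, h2.2.1])
        · exact hdisj _ _ _ _ (fun v h1 h2 => by linarith [h1.2.2, h2.2.2])
        · exact hdisj _ _ _ _ (fun v h1 h2 => h1.1 h2)
      · rcases hX with rfl | rfl | rfl
        · exact hdisj _ _ _ _ (fun v h1 h2 => by linarith [h1.2.2, h2.2.2])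
        · exact hdisj _ _ _ _ (fun v h1 h2 => by linarith [h1.2.1, h2.2.1])
        · exact hdisj _ _ _ _ (fun v h1 h2 => h1.1 h2)
      · rcases hX with rfl | rfl
        · exact hdisj _ _ _ _ (fun v h1 h2 => by linarith [h1.2.1, h2.2.1])
        · exact hdisj _ _ _ _ (fun v h1 h2 => h1.1 h2)
      · rcases hX with rfl
        exact hdisj _ _ _ _ (fun v h1 h2 => h1.1 h2)
    · refine deltaRep_of G c r hG _ (fun v => c v 0 - t) (fun v => c v 1) ?_ ?_ ?_ ?_ ?_ ?_ <;>
        intro v hv <;>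
        rw [Finset.mem_coe, hV1, Finset.mem_filter] at hv
      · show 0 < c v 0 - t
        linarith [hv.2.2.1]
      · exact hv.2.2.2
      · show c v 0 - t ≤ r v
        have h := abs_le.1 ((hmemS v).1 hv.1)
        linarith [h.2]
      · show c v 1 ≤ r v
        have h := abs_le.1 (hline v)
        linarith [h.2]
      · show r v < Real.sqrt ((c v 0 - t)^2 + (c v 1)^2)
        have h := not_le.1 hv.2.1
        rw [hdistpt v] at h
        exact h
      · intro w hw
        ring
    · refine deltaRep_of G c r hG _ (fun v => t - c v 0) (fun v => c v 1) ?_ ?_ ?_ ?_ ?_ ?_ <;>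
        intro v hv <;>
        rw [Finset.mem_coe, hV2, Finset.mem_filter] at hv
      · show 0 < t - c v 0
        linarith [hv.2.2.1]
      · exact hv.2.2.2
      · show t - c v 0 ≤ r v
        have h := abs_le.1 ((hmemS v).1 hv.1)
        linarith [h.1]
      · show c v 1 ≤ r v
        have h := abs_le.1 (hline v)
        linarith [h.2]
      · show r v < Real.sqrt ((t - c v 0)^2 + (c v 1)^2)
        have h := not_le.1 hv.2.1
        rw [hdistpt v] at h
        have heq : (t - c v 0)^2 + (c v 1)^2 = (c v 0 - t)^2 + (c v 1)^2 := by ring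
        rw [heq]
        exact h
      · intro w hw
        ring
    · refine deltaRep_of G c r hG _ (fun v => t - c v 0) (fun v => -(c v 1)) ?_ ?_ ?_ ?_ ?_ ?_ <;>
        intro v hv <;>
        rw [Finset.mem_coe, hV3, Finset.mem_filter] at hv
      · show 0 < t - c v 0
        linarith [hv.2.2.1]
      · show 0 < -(c v 1)
        linarith [hv.2.2.2]
      · show t - c v 0 ≤ r v
        have h := abs_le.1 ((hmemS v).1 hv.1)
        linarith [h.1]
      · show -(c v 1) ≤ r v
        have h := abs_le.1 (hline v)
        linarith [h.1]
      · show r v < Real.sqrt ((t - c v 0)^2 + (-(c v 1))^2)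
        have h := not_le.1 hv.2.1
        rw [hdistpt v] at h
        have heq : (t - c v 0)^2 + (-(c v 1))^2 = (c v 0 - t)^2 + (c v 1)^2 := by ring
        rw [heq]
        exact h
      · intro w hw
        ring
    · refine deltaRep_of G c r hG _ (fun v => c v 0 - t) (fun v => -(c v 1)) ?_ ?_ ?_ ?_ ?_ ?_ <;>
        intro v hv <;>
        rw [Finset.mem_coe, hV4, Finset.mem_filter] at hv
      · show 0 < c v 0 - t
        linarith [hv.2.2.1]
      · show 0 < -(c v 1)
        linarith [hv.2.2.2]
      · show c v 0 - t ≤ r v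
        have h := abs_le.1 ((hmemS v).1 hv.1)
        linarith [h.2]
      · show -(c v 1) ≤ r v
        have h := abs_le.1 (hline v)
        linarith [h.1]
      · show r v < Real.sqrt ((c v 0 - t)^2 + (-(c v 1))^2)
        have h := not_le.1 hv.2.1
        rw [hdistpt v] at h
        have heq : (c v 0 - t)^2 + (-(c v 1))^2 = (c v 0 - t)^2 + (c v 1)^2 := by ring
        rw [heq]
        exact h
      · intro w hw
        ring
    · rw [SimpleGraph.isClique_iff]
      intro u hu v hv hne
      rw [Finset.mem_coe, hV5, Finset.mem_filter] at hu hv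
      refine (hG u v hne).2 ⟨pt, ?_, ?_⟩
      · rw [Metric.mem_closedBall, dist_comm]
        exact hu.2
      · rw [Metric.mem_closedBall, dist_comm]
        exact hv.2
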